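/- arXiv:1807.07640 — 2 statements merged into one kernel-verified Lean document; each statement's English description precedes it below -/
import Mathlib

section
/- For every finite simple graph G with maximum degree Δ, the arboricity of G is at most ⌈(Δ + 1)/2⌉. -/
/-!
Colour as many edges of `G` as possible with `k` colours so that every colour class is a forest,
and suppose some edge `e₀` stays uncoloured. By maximality the ends `x, y` of the uncoloured edge
are joined by a path in every colour class `i`; recolouring `xy` with `i` and uncolouring an edge
`f` of that path is again an optimal colouring, now with `f` uncoloured. Let `A` be the set of
edges that become uncoloured along such exchanges and `U` the vertices they cover. The graph `A`
is connected, and exchanges never join, inside `A`, two vertices of colour class `i` that were not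
joined at the start; hence the ends of every edge of `A` are joined in every initial colour class
restricted to `A`, which therefore has at least `|U| - 1` edges. As `e₀ ∈ A` is uncoloured,
`|A| ≥ k (|U| - 1) + 1`, contradicting the density bound `|E(H)| ≤ k (|V(H)| - 1)`. When
`Δ + 1 ≤ 2k` that bound holds for every subgraph `H`, since `2 |E(H)|` is a sum of `|V(H)|`
degrees, each at most `min (|V(H)| - 1) Δ`.
-/

/-- The edge set of `G` can be partitioned into `k` forests. -/
def HasForestPartition {V : Type*} (G : SimpleGraph V) (k : ℕ) : Prop :=
  ∃ f : G.edgeSet → Fin k, ∀ i : Fin k,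
    (SimpleGraph.fromEdgeSet {e : Sym2 V | ∃ h : e ∈ G.edgeSet, f ⟨e, h⟩ = i}).IsAcyclic

/-- The arboricity of `G`. -/
noncomputable def arboricity {V : Type*} (G : SimpleGraph V) : ℕ :=
  sInf {k | HasForestPartition G k}

open SimpleGraph Function Finset

section

variable {V ι : Type*}

namespace SimpleGraph

variable {H K : SimpleGraph V}

lemma Reachable.of_forall_adj (h : ∀ a b, H.Adj a b → K.Reachable a b) {u v : V}
    (huv : H.Reachable u v) : K.Reachable u v := by
  obtain ⟨p⟩ := huv
  induction p with
  | nil => rfl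
  | cons ha _ ih => exact (h _ _ ha).trans ih

lemma Walk.reachable_of_mem_support {u v w : V} (p : H.Walk u v)
    (hp : ∀ e ∈ p.edges, e ∈ K.edgeSet) (hw : w ∈ p.support) : K.Reachable u w := by
  classical
  exact ⟨(p.transfer K hp).takeUntil w (by rwa [Walk.support_transfer])⟩

lemma reachable_fromEdgeSet_of_mem {s : Set (Sym2 V)} {e : Sym2 V} (he : e ∈ s) {a b : V}
    (ha : a ∈ e) (hb : b ∈ e) : (fromEdgeSet s).Reachable a b := by
  by_cases hab : a = b
  · exact hab ▸ .rfl
  · exact ((fromEdgeSet_adj s).2 ⟨(Sym2.mem_and_mem_iff hab).1 ⟨ha, hb⟩ ▸ he, hab⟩).reachable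

lemma IsAcyclic.sup_edge_deleteEdges {x y : V} (hH : H.IsAcyclic) {p : H.Walk x y}
    (hp : p.IsPath) {f : Sym2 V} (hf : f ∈ p.edges) :
    (H.deleteEdges {f} ⊔ edge x y).IsAcyclic := by
  classical
  refine (hH.anti (H.deleteEdges_le _)).sup_edge_of_not_reachable ?_
  rintro ⟨q⟩
  -- `q.bypass`, read in `H`, is an `x`–`y` path avoiding `f`, so it differs from `p`.
  have hq : ∀ e ∈ q.bypass.edges, e ∈ H.edgeSet := fun e he =>
    edgeSet_mono (H.deleteEdges_le _) (q.bypass.edges_subset_edgeSet he)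
  have hpq := congrArg (fun r : H.Path x y => r.1.edges)
    ((hH.subsingleton_path x y).elim ⟨p, hp⟩ ⟨_, q.bypass_isPath.transfer hq⟩)
  simp only [Walk.edges_transfer] at hpq
  have := q.bypass.edges_subset_edgeSet (hpq ▸ hf)
  simp [edgeSet_deleteEdges] at this

lemma ncard_le_ncard_edgeSet_add_one [Finite V] {r : V} {U : Set V}
    (hU : ∀ u ∈ U, K.Reachable r u) : U.ncard ≤ K.edgeSet.ncard + 1 := by
  set C := K.connectedComponentMk r
  have hUC : U ⊆ C.supp := fun u hu =>
    (ConnectedComponent.mem_supp_iff _ _).2 (ConnectedComponent.sound (hU u hu).symm)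
  calc U.ncard ≤ C.supp.ncard := Set.ncard_le_ncard hUC
    _ = Nat.card C.supp := (Nat.card_coe_set_eq _).symm
    _ ≤ Nat.card C.toSimpleGraph.edgeSet + 1 :=
      C.connected_toSimpleGraph.card_vert_le_card_edgeSet_add_one
    _ ≤ K.edgeSet.ncard + 1 := by
      rw [← Nat.card_coe_set_eq]
      gcongr
      exact Finite.card_le_of_embedding (Embedding.induce C.supp).mapEdgeSet

lemma ncard_edgeSet_le_of_maxDegree [Fintype V] {G : SimpleGraph V} [DecidableRel G.Adj]
    (hHG : H ≤ G) {k : ℕ} (hk : G.maxDegree + 1 ≤ 2 * k) :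
    H.edgeSet.ncard ≤ k * (H.support.ncard - 1) := by
  classical
  set n := H.support.ncard
  have hdeg : ∀ v ∈ H.support, H.degree v ≤ min (n - 1) (2 * k - 1) := by
    intro v hv
    have hnbr : H.neighborFinset v ⊆ H.support.toFinset.erase v := fun w hw => by
      rw [mem_neighborFinset] at hw
      simpa [hw.ne.symm] using H.mem_support.2 ⟨v, hw.symm⟩
    have h1 := card_le_card hnbr
    rw [card_neighborFinset_eq_degree, card_erase_of_mem (Set.mem_toFinset.2 hv),
      ← Set.ncard_eq_toFinset_card'] at h1
    have h2 := (degree_le_of_le hHG).trans (G.degree_le_maxDegree v)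
    omega
  have hsum := H.sum_degrees_support_eq_twice_card_edges
  rw [edgeFinset_card, ← Nat.card_eq_fintype_card, Nat.card_coe_set_eq] at hsum
  have hle : 2 * H.edgeSet.ncard ≤ n * min (n - 1) (2 * k - 1) := by
    rw [← hsum]
    calc _ ≤ #H.support.toFinset • min (n - 1) (2 * k - 1) :=
          sum_le_card_nsmul _ _ _ fun v hv => hdeg v (Set.mem_toFinset.1 hv)
      _ = _ := by rw [smul_eq_mul, ← Set.ncard_eq_toFinset_card']
  have hmin : n * min (n - 1) (2 * k - 1) ≤ 2 * k * (n - 1) := by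
    rcases le_total n (2 * k) with hn | hn
    · calc _ ≤ n * (n - 1) := Nat.mul_le_mul_left _ (min_le_left _ _)
        _ ≤ _ := Nat.mul_le_mul_right _ hn
    · calc _ ≤ n * (2 * k - 1) := Nat.mul_le_mul_left _ (min_le_right _ _)
        _ ≤ _ := by rw [Nat.mul_sub_one, Nat.mul_sub_one, mul_comm n]; omega
  linarith

end SimpleGraph

lemma ncard_eq_ncard_inter_add_sum {α : Type*} [Fintype ι] (c : α → Option ι) {A : Set α}
    (hA : A.Finite) :
    A.ncard = ({a | c a = none} ∩ A).ncard + ∑ i, ({a | c a = some i} ∩ A).ncard := by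
  classical
  have hfib (o : Option ι) : ({a | c a = o} ∩ A).ncard = #{a ∈ hA.toFinset | c a = o} := by
    rw [← Set.ncard_coe_finset]
    congr 1
    ext a
    simp [and_comm]
  rw [Set.ncard_eq_toFinset_card A hA, card_eq_sum_card_fiberwise (f := c) (t := univ)
    (fun _ _ => mem_univ _), Fintype.sum_option]
  simp only [hfib]

/-- `c` is a partial edge colouring: `c e = none` means that `e` is uncoloured. -/
def colorClass (c : Sym2 V → Option ι) (i : ι) : SimpleGraph V :=
  fromEdgeSet {e | c e = some i}

structure IsForestColoring (G : SimpleGraph V) (c : Sym2 V → Option ι) : Prop where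
  mem_edgeSet {e : Sym2 V} {i : ι} : c e = some i → e ∈ G.edgeSet
  isAcyclic (i : ι) : (colorClass c i).IsAcyclic

def coloredEdges (c : Sym2 V → Option ι) : Set (Sym2 V) := {e | c e ≠ none}

section colorClass

variable {c : Sym2 V → Option ι}

@[simp]
lemma mem_edgeSet_colorClass {e : Sym2 V} {i : ι} :
    e ∈ (colorClass c i).edgeSet ↔ c e = some i ∧ ¬e.IsDiag := by
  simp [colorClass]

variable [DecidableEq V]

lemma colorClass_update_none (f : Sym2 V) (i : ι) :
    colorClass (update c f none) i = (colorClass c i).deleteEdges {f} := by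
  ext a b
  simp only [colorClass, fromEdgeSet_adj, deleteEdges_adj, Set.mem_ofPred_eq,
    Set.mem_singleton_iff, update_apply]
  split_ifs <;> simp_all

lemma colorClass_update_some_self (x y : V) (i : ι) :
    colorClass (update c s(x, y) (some i)) i = colorClass c i ⊔ edge x y := by
  ext a b
  simp only [colorClass, fromEdgeSet_adj, sup_adj, edge_adj, Set.mem_ofPred_eq, update_apply]
  split_ifs <;> simp_all

lemma colorClass_update_some_of_ne (e : Sym2 V) {i j : ι} (hji : j ≠ i) :
    colorClass (update c e (some i)) j = (colorClass c j).deleteEdges {e} := by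
  ext a b
  simp only [colorClass, fromEdgeSet_adj, deleteEdges_adj, Set.mem_ofPred_eq,
    Set.mem_singleton_iff, update_apply]
  split_ifs <;> simp_all [Ne.symm hji]

lemma coloredEdges_update_some (e : Sym2 V) (i : ι) :
    coloredEdges (update c e (some i)) = insert e (coloredEdges c) := by
  ext e'
  simp only [coloredEdges, Set.mem_insert_iff, Set.mem_ofPred_eq, update_apply]
  split_ifs <;> simp_all

lemma coloredEdges_update_none (f : Sym2 V) :
    coloredEdges (update c f none) = coloredEdges c \ {f} := by
  ext e'
  simp only [coloredEdges, Set.mem_sdiff, Set.mem_singleton_iff, Set.mem_ofPred_eq,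
    update_apply]
  split_ifs <;> simp_all

lemma IsForestColoring.update_none {G : SimpleGraph V} (hc : IsForestColoring G c)
    (f : Sym2 V) : IsForestColoring G (update c f none) where
  mem_edgeSet {e j} hej := by
    rw [update_apply] at hej
    split_ifs at hej
    exact hc.mem_edgeSet hej
  isAcyclic j := by
    rw [colorClass_update_none]
    exact (hc.isAcyclic j).anti (deleteEdges_le _)

lemma IsForestColoring.update_some {G : SimpleGraph V} (hc : IsForestColoring G c) {x y : V}
    (hxy : s(x, y) ∈ G.edgeSet) {i : ι} (hi : (colorClass c i ⊔ edge x y).IsAcyclic) :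
    IsForestColoring G (update c s(x, y) (some i)) where
  mem_edgeSet {e j} hej := by
    rw [update_apply] at hej
    split_ifs at hej with he
    exacts [he ▸ hxy, hc.mem_edgeSet hej]
  isAcyclic j := by
    rcases eq_or_ne j i with rfl | hji
    · rwa [colorClass_update_some_self]
    · rw [colorClass_update_some_of_ne _ hji]
      exact (hc.isAcyclic j).anti (deleteEdges_le _)

end colorClass

section Exchange

variable [DecidableEq V] {G : SimpleGraph V} {c₀ c : Sym2 V → Option ι} {e₀ e : Sym2 V}

/-- `(c, e)` arises from `(c₀, e₀)` by a sequence of exchanges: the uncoloured edge `xy` receives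
colour `i`, and an edge `f` of the `i`-coloured `x`–`y` path becomes the new uncoloured edge. -/
inductive ExchangeReachable (c₀ : Sym2 V → Option ι) (e₀ : Sym2 V) :
    (Sym2 V → Option ι) → Sym2 V → Prop
  | refl : ExchangeReachable c₀ e₀ c₀ e₀
  | step {c : Sym2 V → Option ι} {x y : V} (h : ExchangeReachable c₀ e₀ c s(x, y)) (i : ι)
      {p : (colorClass c i).Walk x y} (hp : p.IsPath) {f : Sym2 V} (hf : f ∈ p.edges) :
      ExchangeReachable c₀ e₀ (update (update c f none) s(x, y) (some i)) f

def exchangeEdges (c₀ : Sym2 V → Option ι) (e₀ : Sym2 V) : Set (Sym2 V) :=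
  {e | ∃ c, ExchangeReachable c₀ e₀ c e}

namespace ExchangeReachable

lemma mem_exchangeEdges (h : ExchangeReachable c₀ e₀ c e) : e ∈ exchangeEdges c₀ e₀ :=
  ⟨c, h⟩

lemma eq_none (hu₀ : c₀ e₀ = none) (h : ExchangeReachable c₀ e₀ c e) : c e = none := by
  induction h with
  | refl => exact hu₀
  | step _ i hp hf ih =>
    have hf' := (mem_edgeSet_colorClass.1 ((Walk.edges_subset_edgeSet _) hf)).1
    rw [update_of_ne (by rintro rfl; simp_all), update_self]

lemma isForestColoring (hc₀ : IsForestColoring G c₀) (he₀ : e₀ ∈ G.edgeSet)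
    (h : ExchangeReachable c₀ e₀ c e) : IsForestColoring G c ∧ e ∈ G.edgeSet := by
  induction h with
  | refl => exact ⟨hc₀, he₀⟩
  | @step c x y _ i p hp f hf ih =>
    obtain ⟨hc, hxy⟩ := ih
    refine ⟨(hc.update_none f).update_some hxy ?_,
      hc.mem_edgeSet (mem_edgeSet_colorClass.1 (p.edges_subset_edgeSet hf)).1⟩
    rw [colorClass_update_none]
    exact (hc.isAcyclic i).sup_edge_deleteEdges hp hf

lemma ncard_coloredEdges [Finite V] (hu₀ : c₀ e₀ = none) (h : ExchangeReachable c₀ e₀ c e) :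
    (coloredEdges c).ncard = (coloredEdges c₀).ncard := by
  induction h with
  | refl => rfl
  | step h i hp hf ih =>
    have hf' := (mem_edgeSet_colorClass.1 ((Walk.edges_subset_edgeSet _) hf)).1
    rw [coloredEdges_update_some, coloredEdges_update_none, Set.ncard_insert_of_notMem
      (by simp [coloredEdges, h.eq_none hu₀]), Set.ncard_sdiff_singleton_add_one
      (by simp [coloredEdges, hf']), ih]

lemma reachable_colorClass [Finite V]
    (hmax : MaximalFor (IsForestColoring G) (fun c => (coloredEdges c).ncard) c₀)
    (he₀ : e₀ ∈ G.edgeSet) (hu₀ : c₀ e₀ = none) {x y : V}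
    (h : ExchangeReachable c₀ e₀ c s(x, y)) (i : ι) : (colorClass c i).Reachable x y := by
  by_contra hxy
  obtain ⟨hc, he⟩ := h.isForestColoring hmax.prop he₀
  have hcount :
      (coloredEdges (update c s(x, y) (some i))).ncard = (coloredEdges c₀).ncard + 1 := by
    rw [coloredEdges_update_some, Set.ncard_insert_of_notMem
      (by simp [coloredEdges, h.eq_none hu₀]), h.ncard_coloredEdges hu₀]
  have := hmax.2 (hc.update_some he ((hc.isAcyclic i).sup_edge_of_not_reachable hxy))
    (by simp only [hcount]; omega)
  simp [hcount] at this

lemma edges_subset_edgeSet_inf {x y : V} (h : ExchangeReachable c₀ e₀ c s(x, y)) (i : ι)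
    {p : (colorClass c i).Walk x y} (hp : p.IsPath) :
    ∀ g ∈ p.edges, g ∈ (colorClass c i ⊓ fromEdgeSet (exchangeEdges c₀ e₀)).edgeSet := by
  intro g hg
  have hgc := p.edges_subset_edgeSet hg
  rw [edgeSet_inf, edgeSet_fromEdgeSet]
  exact ⟨hgc, (h.step i hp hg).mem_exchangeEdges, (mem_edgeSet_colorClass.1 hgc).2⟩

lemma reachable_colorClass_inf_of_reachable (h : ExchangeReachable c₀ e₀ c e) (i : ι)
    {u v : V} (huv : (colorClass c i ⊓ fromEdgeSet (exchangeEdges c₀ e₀)).Reachable u v) :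
    (colorClass c₀ i ⊓ fromEdgeSet (exchangeEdges c₀ e₀)).Reachable u v := by
  induction h with
  | refl => exact huv
  | @step c x y h j p hp f hf ih =>
    refine ih (Reachable.of_forall_adj (fun a b hab => ?_) huv)
    rcases eq_or_ne i j with rfl | hij
    · rw [colorClass_update_some_self, colorClass_update_none] at hab
      obtain ⟨hab | hab, hA⟩ := hab
      · exact Adj.reachable ⟨hab.1, hA⟩
      · have hxy : (colorClass c i ⊓ fromEdgeSet (exchangeEdges c₀ e₀)).Reachable x y :=
          ⟨p.transfer _ (h.edges_subset_edgeSet_inf i hp)⟩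
        obtain ⟨⟨rfl, rfl⟩ | ⟨rfl, rfl⟩, -⟩ := (edge_adj _ _ _ _).1 hab
        exacts [hxy, hxy.symm]
    · rw [colorClass_update_some_of_ne _ hij, colorClass_update_none] at hab
      exact Adj.reachable ⟨hab.1.1.1, hab.2⟩

lemma reachable_of_mem (h : ExchangeReachable c₀ e₀ c e) {a b : V} (ha : a ∈ e)
    (hb : b ∈ e₀) : (fromEdgeSet (exchangeEdges c₀ e₀)).Reachable a b := by
  induction h generalizing a with
  | refl => exact reachable_fromEdgeSet_of_mem refl.mem_exchangeEdges ha hb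
  | @step c x y h i p hp f hf ih =>
    have hpA : ∀ g ∈ p.edges, g ∈ (fromEdgeSet (exchangeEdges c₀ e₀)).edgeSet :=
      fun g hg => edgeSet_mono inf_le_right (h.edges_subset_edgeSet_inf i hp g hg)
    exact (p.reachable_of_mem_support hpA (Walk.mem_support_of_mem_edges hf ha)).symm.trans
      (ih (Sym2.mem_mk_left x y))

end ExchangeReachable

lemma reachable_colorClass_inf_of_mem_exchangeEdges [Finite V]
    (hmax : MaximalFor (IsForestColoring G) (fun c => (coloredEdges c).ncard) c₀)
    (he₀ : e₀ ∈ G.edgeSet) (hu₀ : c₀ e₀ = none)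
    {a b : V} (hab : s(a, b) ∈ exchangeEdges c₀ e₀) (i : ι) :
    (colorClass c₀ i ⊓ fromEdgeSet (exchangeEdges c₀ e₀)).Reachable a b := by
  obtain ⟨c, h⟩ := hab
  obtain ⟨p⟩ := h.reachable_colorClass hmax he₀ hu₀ i
  exact h.reachable_colorClass_inf_of_reachable i
    ⟨p.bypass.transfer _ (h.edges_subset_edgeSet_inf i p.bypass_isPath)⟩

lemma ncard_support_exchangeEdges_le [Finite V]
    (hmax : MaximalFor (IsForestColoring G) (fun c => (coloredEdges c).ncard) c₀)
    (he₀ : e₀ ∈ G.edgeSet) (hu₀ : c₀ e₀ = none) (i : ι) :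
    (fromEdgeSet (exchangeEdges c₀ e₀)).support.ncard ≤
      ({e | c₀ e = some i} ∩ exchangeEdges c₀ e₀).ncard + 1 := by
  set A := exchangeEdges c₀ e₀
  obtain ⟨r, hr⟩ : ∃ r, r ∈ e₀ := ⟨_, Sym2.out_fst_mem e₀⟩
  have hconn : ∀ u ∈ (fromEdgeSet A).support,
      (colorClass c₀ i ⊓ fromEdgeSet A).Reachable r u := by
    rintro u ⟨w, huw⟩
    obtain ⟨c, h⟩ := ((fromEdgeSet_adj _).1 huw).1
    refine (Reachable.of_forall_adj (fun a b hab => ?_)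
      (h.reachable_of_mem (Sym2.mem_mk_left u w) hr)).symm
    exact reachable_colorClass_inf_of_mem_exchangeEdges hmax he₀ hu₀
      ((fromEdgeSet_adj _).1 hab).1 i
  have hE : (colorClass c₀ i ⊓ fromEdgeSet A).edgeSet ⊆ {e | c₀ e = some i} ∩ A := by
    rw [edgeSet_inf, edgeSet_fromEdgeSet]
    exact fun e he => ⟨(mem_edgeSet_colorClass.1 he.1).1, he.2.1⟩
  exact (ncard_le_ncard_edgeSet_add_one hconn).trans
    (Nat.add_le_add_right (Set.ncard_le_ncard hE) 1)

end Exchange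

theorem ne_none_of_maximalFor [Fintype V] [Fintype ι] {G : SimpleGraph V}
    (hNW : ∀ H ≤ G, H.edgeSet.ncard ≤ Fintype.card ι * (H.support.ncard - 1))
    {c₀ : Sym2 V → Option ι}
    (hmax : MaximalFor (IsForestColoring G) (fun c => (coloredEdges c).ncard) c₀)
    {e₀ : Sym2 V} (he₀ : e₀ ∈ G.edgeSet) : c₀ e₀ ≠ none := by
  classical
  intro hu₀
  have hU := ncard_support_exchangeEdges_le hmax he₀ hu₀
  have hsplit := ncard_eq_ncard_inter_add_sum c₀ (exchangeEdges c₀ e₀).toFinite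
  set A := exchangeEdges c₀ e₀
  have hAG : A ⊆ G.edgeSet := fun e ⟨c, h⟩ => (h.isForestColoring hmax.prop he₀).2
  have hA : A.ncard ≤ Fintype.card ι * ((fromEdgeSet A).support.ncard - 1) := by
    refine le_trans (Set.ncard_le_ncard fun e he => ?_) (hNW _ ?_)
    · rw [edgeSet_fromEdgeSet]
      exact ⟨he, G.not_isDiag_of_mem_edgeSet (hAG he)⟩
    · simpa using fromEdgeSet_mono hAG
  have hsum : Fintype.card ι * ((fromEdgeSet A).support.ncard - 1) ≤
      ∑ i, ({e | c₀ e = some i} ∩ A).ncard := by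
    calc _ = ∑ _i : ι, ((fromEdgeSet A).support.ncard - 1) := by simp
      _ ≤ _ := sum_le_sum fun i _ => by have := hU i; omega
  have hnone : 0 < ({e | c₀ e = none} ∩ A).ncard :=
    (Set.ncard_pos (Set.toFinite _)).2 ⟨e₀, hu₀, ExchangeReachable.refl.mem_exchangeEdges⟩
  omega

lemma IsForestColoring.hasForestPartition {G : SimpleGraph V} {k : ℕ}
    {c : Sym2 V → Option (Fin k)} (hc : IsForestColoring G c)
    (htot : ∀ e ∈ G.edgeSet, c e ≠ none) : HasForestPartition G k := by
  refine ⟨fun e => (c e).get (Option.isSome_iff_ne_none.2 (htot e e.2)), fun i =>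
    (hc.isAcyclic i).anti (fromEdgeSet_mono ?_)⟩
  rintro e ⟨he, rfl⟩
  simp

/-- The sufficiency half of Nash-Williams' arboricity theorem. -/
theorem hasForestPartition_of_forall_ncard_edgeSet_le [Fintype V] {G : SimpleGraph V} {k : ℕ}
    (hNW : ∀ H ≤ G, H.edgeSet.ncard ≤ k * (H.support.ncard - 1)) : HasForestPartition G k := by
  classical
  obtain ⟨c₀, hmax⟩ := Set.Finite.exists_maximalFor (fun c => (coloredEdges c).ncard)
    {c : Sym2 V → Option (Fin k) | IsForestColoring G c} (Set.toFinite _)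
    ⟨fun _ => none, fun h => by simp at h, fun i => by simp [colorClass]⟩
  exact hmax.prop.hasForestPartition fun e he =>
    ne_none_of_maximalFor (by simpa using hNW) hmax he

end

/-- For every finite simple graph `G` with maximum degree `Δ`, the arboricity of
`G` is at most `⌈(Δ + 1)/2⌉`. -/
theorem stmt3 {V : Type*} [Fintype V] (G : SimpleGraph V) [DecidableRel G.Adj] :
    arboricity G ≤ Nat.ceil (((G.maxDegree : ℚ) + 1) / 2) := by
  refine Nat.sInf_le (hasForestPartition_of_forall_ncard_edgeSet_le fun H hHG =>
    ncard_edgeSet_le_of_maxDegree hHG ?_)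
  have hceil := Nat.le_ceil (((G.maxDegree : ℚ) + 1) / 2)
  exact_mod_cast (by linarith : (G.maxDegree : ℚ) + 1 ≤ 2 * ⌈((G.maxDegree : ℚ) + 1) / 2⌉₊)
end

section
/- Nash-Williams formula: for a finite simple graph G with at least 2 vertices, the arboricity of G equals the maximum over all vertex subsets S with |S| ≥ 2 of ⌈|E(S)| / (|S| − 1)⌉, where E(S) is the set of edges of G with both endpoints in S. -/
/-!
A partition of the edges into `m` forests gives `|E(S)| ≤ m (|S| - 1)`, since a forest on `S` has
at most `|S| - 1` edges.

Conversely, assume `|E(S)| ≤ k (|S| - 1)` for all `S` and add the edges one at a time to a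
partition into `k` forests. To place a new edge `e₀ ∋ x₀`, exchange: while the pending edge `xy`
closes a cycle in every color class, give it some color `i` and make an edge of the `x`–`y` path
of class `i` pending instead; every class stays a forest. Suppose no sequence of exchanges ever
yields a pending edge that can be added, and let `U` be the component of `x₀` in the graph of all
edges that can become pending. Exchanges only use paths inside `U`, so they never change which
vertices of `U` each class restricted to `U` connects. As every edge that can become pending has
its ends connected in every class, each restricted class connects `U` and so has at least
`|U| - 1` edges. Thus `E(U)` contains `e₀` and at least `k (|U| - 1)` further edges, which is
too many.
-/

theorem Nat.ceil_div_le_iff_le_mul {K : Type*} [Field K] [LinearOrder K] [IsStrictOrderedRing K]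
    [FloorSemiring K] {a b c : ℕ} (hc : 0 < c) : ⌈(a : K) / c⌉₊ ≤ b ↔ a ≤ b * c := by
  rw [Nat.ceil_le, div_le_iff₀ (by positivity)]
  norm_cast

namespace SimpleGraph

open Finset

variable {V : Type*} {G H : SimpleGraph V}

theorem reachable_le_of_forall_adj (h : ∀ ⦃a b⦄, G.Adj a b → H.Reachable a b) :
    G.Reachable ≤ H.Reachable := by
  rw [reachable_eq_reflTransGen, reachable_eq_reflTransGen]
  exact Relation.ReflTransGen.lift' id fun a b hab => (reachable_iff_reflTransGen a b).1 (h hab)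

theorem Walk.IsTrail.exists_reachable_deleteEdges {x y : V} {w : G.Walk x y} (hw : w.IsTrail)
    {e : Sym2 V} (he : e ∈ w.edges) :
    ∃ a b, s(a, b) = e ∧
      (G.deleteEdges {e}).Reachable x a ∧ (G.deleteEdges {e}).Reachable b y := by
  induction w with
  | nil => simp at he
  | @cons u c y hadj p ih =>
    rw [Walk.isTrail_cons] at hw
    rcases List.mem_cons.1 (Walk.edges_cons .. ▸ he) with rfl | he
    · exact ⟨u, c, rfl, .rfl, ⟨p.toDeleteEdges _ fun f hf => by rintro rfl; exact hw.2 hf⟩⟩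
    · obtain ⟨a, b, hab, hxa, hby⟩ := ih hw.1 he
      have hadj' : (G.deleteEdges {e}).Adj u c :=
        (deleteEdges_adj ..).2 ⟨hadj, fun h => hw.2 (h ▸ he)⟩
      exact ⟨a, b, hab, hadj'.reachable.trans hxa, hby⟩

theorem reachable_deleteEdges_sup_edge {x y : V} {w : G.Walk x y} (hw : w.IsTrail)
    {e : Sym2 V} (he : e ∈ w.edges) :
    (G.deleteEdges {e} ⊔ edge x y).Reachable = G.Reachable := by
  refine le_antisymm (reachable_le_of_forall_adj fun a b hab => ?_)
    (reachable_le_of_forall_adj fun a b hab => ?_)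
  · rcases hab with hab | hab
    · exact (deleteEdges_le _ hab).reachable
    · rcases (edge_adj ..).1 hab with ⟨⟨rfl, rfl⟩ | ⟨rfl, rfl⟩, -⟩
      exacts [⟨w⟩, ⟨w.reverse⟩]
  · have hle : G.deleteEdges {e} ≤ G.deleteEdges {e} ⊔ edge x y := le_sup_left
    by_cases hab' : s(a, b) = e
    · obtain ⟨u, v, huv, hxu, hvy⟩ := hw.exists_reachable_deleteEdges he
      have hxy : (G.deleteEdges {e} ⊔ edge x y).Reachable x y := by
        rcases eq_or_ne x y with rfl | hne
        · rfl
        · exact (le_sup_right (a := G.deleteEdges {e})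
            ((edge_adj ..).2 ⟨.inl ⟨rfl, rfl⟩, hne⟩)).reachable
      have huv' : (G.deleteEdges {e} ⊔ edge x y).Reachable u v :=
        ((hxu.mono hle).symm.trans hxy).trans (hvy.mono hle).symm
      rw [← huv, Sym2.eq_iff] at hab'
      rcases hab' with ⟨rfl, rfl⟩ | ⟨rfl, rfl⟩
      exacts [huv', huv'.symm]
    · exact (hle ((deleteEdges_adj ..).2 ⟨hab, by simpa using hab'⟩)).reachable

theorem IsAcyclic.deleteEdges_sup_edge [DecidableEq V] (hG : G.IsAcyclic) {x y : V}
    {w : G.Walk x y} (hw : w.IsPath) {e : Sym2 V} (he : e ∈ w.edges) :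
    (G.deleteEdges {e} ⊔ edge x y).IsAcyclic := by
  refine (hG.anti (deleteEdges_le _)).sup_edge_of_not_reachable fun ⟨p⟩ => ?_
  have hp := (hG.subsingleton_path x y).elim ⟨w, hw⟩ ⟨p.toPath.1.mapLe (deleteEdges_le _),
    (Walk.isPath_mapLe _).2 p.toPath.2⟩
  simp only [Subtype.mk.injEq] at hp
  rw [hp, Walk.edges_mapLe_eq_edges] at he
  simpa using (p.toPath.1.edges_subset_edgeSet he)

theorem Walk.support_subset_of_support_subset {S : Set V} (hG : G.support ⊆ S) {a b : V}
    (ha : a ∈ S) (w : G.Walk a b) : ∀ z ∈ w.support, z ∈ S := by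
  induction w with
  | nil => simpa using ha
  | cons hadj p ih => simpa [ha] using ih (hG ⟨_, hadj.symm⟩)

variable [Fintype V]

theorem card_le_card_edgeFinset_add_one_of_reachable [DecidableRel G.Adj] {S : Finset V}
    (hS : S.Nonempty) (hG : G.support ⊆ S) (hconn : ∀ a ∈ S, ∀ b ∈ S, G.Reachable a b) :
    #S ≤ #G.edgeFinset + 1 := by
  classical
  have hconn' : (G.induce (S : Set V)).Connected := by
    refine (connected_iff _).2 ⟨fun a b => ?_, hS.coe_sort⟩
    obtain ⟨w⟩ := hconn a a.2 b b.2
    exact ⟨w.induce _ (Walk.support_subset_of_support_subset hG a.2 w)⟩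
  have := hconn'.card_vert_le_card_edgeSet_add_one
  rw [Nat.card_coe_set_eq, Set.ncard_coe_finset, Nat.card_eq_fintype_card,
    ← edgeFinset_card] at this
  convert this using 2
  rw [← card_edgeFinset_induce_of_support_subset hG]
  convert rfl

theorem IsAcyclic.card_edgeFinset_inter_sym2_le [DecidableEq V] [Fintype G.edgeSet]
    (hG : G.IsAcyclic) (S : Finset V) : #(G.edgeFinset ∩ S.sym2) ≤ #S - 1 := by
  rcases S.eq_empty_or_nonempty with rfl | ⟨v, hv⟩
  · simp
  have : Nonempty S := ⟨⟨v, hv⟩⟩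
  obtain ⟨T, hle, -, hT⟩ := connected_top.exists_isTree_le_of_le_of_isAcyclic le_top
    (hG.induce (S : Set V))
  classical
  calc #(G.edgeFinset ∩ S.sym2) = #(G.induce (S : Set V)).edgeFinset := by
        have h := congrArg card (map_edgeFinset_induce (G := G) (s := (S : Set V)))
        rw [card_map, Finset.toFinset_coe] at h
        convert h.symm using 3
        ext
        simp only [mem_edgeFinset]
    _ ≤ #T.edgeFinset := card_le_card (edgeFinset_mono hle)
    _ = #S - 1 := by
        have := hT.card_edgeFinset
        simp only [Finset.coe_sort_coe, Fintype.card_coe] at this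
        omega

end SimpleGraph

section NashWilliams

open SimpleGraph Finset Function Relation

variable {V : Type*}

abbrev graphOf (F : Finset (Sym2 V)) : SimpleGraph V := fromEdgeSet F

section

variable {F : Finset (Sym2 V)}

theorem mem_of_mem_edges_graphOf {x y : V} (w : (graphOf F).Walk x y) {e : Sym2 V}
    (he : e ∈ w.edges) : e ∈ F := by
  simpa using ((edgeSet_fromEdgeSet _ ▸ w.edges_subset_edgeSet he) : e ∈ (F : Set _) \ _).1

variable [DecidableEq V]

theorem graphOf_insert (x y : V) (F : Finset (Sym2 V)) :
    graphOf (insert s(x, y) F) = graphOf F ⊔ edge x y := by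
  rw [graphOf, coe_insert, Set.insert_eq, fromEdgeSet_union, sup_comm]; rfl

theorem graphOf_insert_erase (x y : V) (F : Finset (Sym2 V)) (e : Sym2 V) :
    graphOf (insert s(x, y) (F.erase e)) = (graphOf F).deleteEdges {e} ⊔ edge x y := by
  rw [graphOf_insert, graphOf, coe_erase, fromEdgeSet_sdiff]; rfl

theorem edges_subset_edgeSet_graphOf_inter_sym2 {W : Finset V} {x y : V}
    (w : (graphOf F).Walk x y) (hW : ∀ z ∈ w.support, z ∈ W) :
    ∀ e ∈ w.edges, e ∈ (graphOf (F ∩ W.sym2)).edgeSet := by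
  intro e he
  rw [edgeSet_fromEdgeSet]
  refine ⟨mem_coe.2 (mem_inter.2 ⟨mem_of_mem_edges_graphOf w he,
    mem_sym2_iff.2 fun z hz => hW z (Walk.mem_support_of_mem_edges he hz)⟩), ?_⟩
  exact (graphOf F).not_isDiag_of_mem_edgeSet (w.edges_subset_edgeSet he)

end

/-- A coloring of the edges in which the edge `pending` is still to be placed; the value
`color pending` is ignored. -/
structure PendingColoring (V : Type*) (k : ℕ) where
  color : Sym2 V → Fin k
  pending : Sym2 V

namespace PendingColoring

variable [DecidableEq V] {k : ℕ} (E : Finset (Sym2 V))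

def forest (σ : PendingColoring V k) (i : Fin k) : Finset (Sym2 V) :=
  {e ∈ E.erase σ.pending | σ.color e = i}

def IsValid (σ : PendingColoring V k) : Prop :=
  σ.pending ∈ E ∧ ∀ i, (graphOf (σ.forest E i)).IsAcyclic

inductive Step : PendingColoring V k → PendingColoring V k → Prop
  | swap (σ : PendingColoring V k) (i : Fin k) {x y : V} (w : (graphOf (σ.forest E i)).Walk x y)
      (hw : w.IsPath) (hxy : σ.pending = s(x, y)) {e : Sym2 V} (he : e ∈ w.edges) :
      Step σ ⟨update σ.color σ.pending i, e⟩

variable {E} {σ τ σ₀ : PendingColoring V k}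

theorem filter_update_pending (hσ : σ.pending ∈ E) (i j : Fin k) :
    {e ∈ E | update σ.color σ.pending i e = j} =
      if j = i then insert σ.pending (σ.forest E i) else σ.forest E j := by
  ext e
  by_cases he : e = σ.pending
  · subst he; split_ifs with hj <;> simp [forest, Ne.symm, *]
  · split_ifs with hj <;> simp [forest, update_of_ne, *]

theorem forest_swap (hσ : σ.pending ∈ E) {i : Fin k} {e : Sym2 V} (he : e ∈ σ.forest E i)
    (j : Fin k) :
    (⟨update σ.color σ.pending i, e⟩ : PendingColoring V k).forest E j =
      if j = i then insert σ.pending ((σ.forest E i).erase e) else σ.forest E j := by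
  simp only [forest, mem_filter, mem_erase] at he
  ext e'
  by_cases h₁ : e' = σ.pending
  · subst h₁; split_ifs with hj <;> simp [forest, Ne.symm, *]
  · by_cases h₂ : e' = e
    · subst h₂; split_ifs with hj <;> simp [forest, Ne.symm, *]
    · split_ifs with hj <;> simp [forest, update_of_ne, *]

theorem IsValid.step (hσ : σ.IsValid E) (h : Step E σ τ) : τ.IsValid E := by
  cases h with | swap i w hw hxy he =>
  have heF := mem_of_mem_edges_graphOf w he
  refine ⟨mem_of_mem_erase (mem_filter.1 heF).1, fun j => ?_⟩
  rw [forest_swap hσ.1 heF]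
  split_ifs
  · rw [hxy, graphOf_insert_erase]
    exact (hσ.2 i).deleteEdges_sup_edge hw he
  · exact hσ.2 j

theorem IsValid.of_reflTransGen (h₀ : σ₀.IsValid E) (h : ReflTransGen (Step E) σ₀ σ) :
    σ.IsValid E := by
  induction h with
  | refl => exact h₀
  | tail _ hστ ih => exact ih.step hστ

theorem IsValid.reachable_of_forall_not_isAcyclic
    (hno : ∀ c : Sym2 V → Fin k, ∃ i, ¬(graphOf {e ∈ E | c e = i}).IsAcyclic)
    (hσ : σ.IsValid E) {x y : V} (hxy : σ.pending = s(x, y)) (i : Fin k) :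
    (graphOf (σ.forest E i)).Reachable x y := by
  by_contra h
  obtain ⟨j, hj⟩ := hno (update σ.color σ.pending i)
  rw [filter_update_pending hσ.1] at hj
  split_ifs at hj with hji
  · rw [hxy, graphOf_insert] at hj
    exact hj ((hσ.2 i).sup_edge_of_not_reachable h)
  · exact hj (hσ.2 j)

variable (E) in
def pendingGraph (σ₀ : PendingColoring V k) : SimpleGraph V :=
  fromEdgeSet {f | ∃ σ, ReflTransGen (Step E) σ₀ σ ∧ σ.pending = f}

theorem pendingGraph_reachable_of_mem_support (hσ : ReflTransGen (Step E) σ₀ σ) {i : Fin k}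
    {x y x₀ : V} (w : (graphOf (σ.forest E i)).Walk x y) (hw : w.IsPath) (hxy : σ.pending = s(x, y))
    (hx : (pendingGraph E σ₀).Reachable x₀ x) :
    ∀ z ∈ w.support, (pendingGraph E σ₀).Reachable x₀ z := by
  have hedges : ∀ e ∈ w.edges, e ∈ (pendingGraph E σ₀).edgeSet := fun e he => by
    rw [pendingGraph, edgeSet_fromEdgeSet]
    exact ⟨⟨_, hσ.tail (.swap σ i w hw hxy he), rfl⟩,
      (graphOf _).not_isDiag_of_mem_edgeSet (w.edges_subset_edgeSet he)⟩
  intro z hz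
  rw [← w.support_transfer hedges] at hz
  exact hx.trans ⟨(w.transfer _ hedges).takeUntil z hz⟩

theorem pendingGraph_reachable_of_mem_pending {x₀ : V} (hx₀ : x₀ ∈ σ₀.pending)
    (hσ : ReflTransGen (Step E) σ₀ σ) : ∀ z ∈ σ.pending, (pendingGraph E σ₀).Reachable x₀ z := by
  induction hσ with
  | refl =>
    intro z hz
    rcases eq_or_ne x₀ z with rfl | hne
    · rfl
    exact Adj.reachable ((fromEdgeSet_adj _).2
      ⟨⟨σ₀, .refl, (Sym2.mem_and_mem_iff hne).1 ⟨hx₀, hz⟩⟩, hne⟩)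
  | tail hσ hστ ih =>
    cases hστ with | swap i w hw hxy he =>
    exact fun z hz => pendingGraph_reachable_of_mem_support hσ w hw hxy
      (ih _ (hxy ▸ Sym2.mem_mk_left _ _)) z (Walk.mem_support_of_mem_edges he hz)

theorem reachable_forest_inter_sym2_eq (h₀ : σ₀.IsValid E) {x₀ : V} (hx₀ : x₀ ∈ σ₀.pending)
    {U : Finset V} (hU : ∀ z, (pendingGraph E σ₀).Reachable x₀ z → z ∈ U)
    (hσ : ReflTransGen (Step E) σ₀ σ) (j : Fin k) :
    (graphOf (σ.forest E j ∩ U.sym2)).Reachable =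
      (graphOf (σ₀.forest E j ∩ U.sym2)).Reachable := by
  induction hσ with
  | refl => rfl
  | @tail σ τ hσ hστ ih =>
    cases hστ with | swap i w hw hxy he =>
    have hW : ∀ z ∈ w.support, z ∈ U := fun z hz => hU z <|
      pendingGraph_reachable_of_mem_support hσ w hw hxy
        (pendingGraph_reachable_of_mem_pending hx₀ hσ _ (hxy ▸ Sym2.mem_mk_left _ _)) z hz
    have hpend : σ.pending ∈ U.sym2 := by
      rw [hxy, mk_mem_sym2_iff]
      exact ⟨hW _ w.start_mem_support, hW _ w.end_mem_support⟩
    rw [forest_swap (h₀.of_reflTransGen hσ).1 (mem_of_mem_edges_graphOf w he)]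
    split_ifs with hji
    · subst hji
      let w' := w.transfer _ (edges_subset_edgeSet_graphOf_inter_sym2 w hW)
      rw [insert_inter_of_mem hpend, erase_inter, hxy, graphOf_insert_erase,
        reachable_deleteEdges_sup_edge (w := w') (hw.transfer _).isTrail
          (by rwa [Walk.edges_transfer]), ih]
    · exact ih

theorem reachable_of_pendingGraph_adj
    (hno : ∀ c : Sym2 V → Fin k, ∃ i, ¬(graphOf {e ∈ E | c e = i}).IsAcyclic)
    (h₀ : σ₀.IsValid E) {x₀ : V} (hx₀ : x₀ ∈ σ₀.pending)
    {U : Finset V} (hU : ∀ z, (pendingGraph E σ₀).Reachable x₀ z → z ∈ U)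
    {a b : V} (hab : (pendingGraph E σ₀).Adj a b) (i : Fin k) :
    (graphOf (σ₀.forest E i ∩ U.sym2)).Reachable a b := by
  obtain ⟨⟨σ, hσ, hab⟩, -⟩ := (fromEdgeSet_adj _).1 hab
  obtain ⟨w⟩ := (h₀.of_reflTransGen hσ).reachable_of_forall_not_isAcyclic hno hab i
  have hW : ∀ z ∈ w.toPath.1.support, z ∈ U := fun z hz => hU z <|
    pendingGraph_reachable_of_mem_support hσ _ w.toPath.2 hab
      (pendingGraph_reachable_of_mem_pending hx₀ hσ _ (hab ▸ Sym2.mem_mk_left _ _)) z hz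
  rw [← reachable_forest_inter_sym2_eq h₀ hx₀ hU hσ]
  exact ⟨w.toPath.1.transfer _ (edges_subset_edgeSet_graphOf_inter_sym2 _ hW)⟩

variable [Fintype V]

theorem exists_isAcyclic_of_isValid (hsp : ∀ S : Finset V, #(E ∩ S.sym2) ≤ k * (#S - 1))
    (h₀ : σ₀.IsValid E) : ∃ c : Sym2 V → Fin k, ∀ i, (graphOf {e ∈ E | c e = i}).IsAcyclic := by
  classical
  by_contra! hno
  obtain ⟨x₀, hx₀⟩ : ∃ x₀, x₀ ∈ σ₀.pending := ⟨_, Sym2.out_fst_mem _⟩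
  set U : Finset V := {z | (pendingGraph E σ₀).Reachable x₀ z}
  have hU : ∀ z, z ∈ U ↔ (pendingGraph E σ₀).Reachable x₀ z := by simp [U]
  have hpend : σ₀.pending ∈ E ∩ U.sym2 := mem_inter.2 ⟨h₀.1, mem_sym2_iff.2 fun z hz =>
    (hU z).2 (pendingGraph_reachable_of_mem_pending hx₀ .refl z hz)⟩
  have hconn (i : Fin k) : #U ≤ #(σ₀.forest E i ∩ U.sym2) + 1 := by
    refine (card_le_card_edgeFinset_add_one_of_reachable
      (G := graphOf (σ₀.forest E i ∩ U.sym2)) ⟨x₀, (hU x₀).2 .rfl⟩ ?_ fun a ha b hb => ?_).trans ?_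
    · rintro z ⟨z', hzz'⟩
      exact mem_sym2_iff.1 (mem_inter.1 ((fromEdgeSet_adj _).1 hzz').1).2 z (Sym2.mem_mk_left ..)
    · have h := reachable_le_of_forall_adj fun _ _ h =>
        reachable_of_pendingGraph_adj hno h₀ hx₀ (fun z => (hU z).2) h i
      exact (h _ _ ((hU a).1 ha)).symm.trans (h _ _ ((hU b).1 hb))
    · refine Nat.add_le_add_right (card_le_card fun e he => ?_) 1
      simp only [mem_edgeFinset, edgeSet_fromEdgeSet] at he
      exact he.1
  have hsum : ∑ i, #(σ₀.forest E i ∩ U.sym2) + 1 = #(E ∩ U.sym2) := by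
    rw [← card_erase_add_one hpend, card_eq_sum_card_fiberwise (f := σ₀.color) (t := univ)
      (by simp)]
    refine congrArg (· + 1) (sum_congr rfl fun i _ => congrArg card (ext fun e => ?_))
    simp only [forest, mem_filter, mem_inter, mem_erase]
    tauto
  have hle : k * (#U - 1) ≤ ∑ i, #(σ₀.forest E i ∩ U.sym2) := by
    simpa using sum_le_sum fun i (_ : i ∈ univ) => Nat.sub_le_of_le_add (hconn i)
  have := hsp U
  omega

variable (E) in
theorem exists_isAcyclic_of_sparse (hk : 0 < k)
    (hsp : ∀ S : Finset V, #(E ∩ S.sym2) ≤ k * (#S - 1)) :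
    ∃ c : Sym2 V → Fin k, ∀ i, (graphOf {e ∈ E | c e = i}).IsAcyclic := by
  induction E using Finset.induction_on with
  | empty => exact ⟨fun _ => ⟨0, hk⟩, fun i => by
    simpa only [filter_empty, graphOf, coe_empty, fromEdgeSet_empty] using isAcyclic_bot⟩
  | @insert e E he ih =>
    obtain ⟨c, hc⟩ := ih fun S =>
      (card_le_card (inter_subset_inter_right (subset_insert ..))).trans (hsp S)
    exact exists_isAcyclic_of_isValid hsp (σ₀ := ⟨c, e⟩)
      ⟨mem_insert_self .., fun i => by simpa [forest, erase_insert he] using hc i⟩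

end PendingColoring

section

variable [Fintype V] [DecidableEq V] {G : SimpleGraph V} [DecidableRel G.Adj]

theorem HasForestPartition.card_edgeFinset_inter_sym2_le {m : ℕ} (h : HasForestPartition G m)
    (S : Finset V) : #(G.edgeFinset ∩ S.sym2) ≤ m * (#S - 1) := by
  classical
  obtain ⟨f, hf⟩ := h
  let H (i : Fin m) : SimpleGraph V := fromEdgeSet {e | ∃ h : e ∈ G.edgeSet, f ⟨e, h⟩ = i}
  calc #(G.edgeFinset ∩ S.sym2) ≤ #(univ.biUnion fun i => (H i).edgeFinset ∩ S.sym2) := by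
        refine card_le_card fun e he => ?_
        obtain ⟨he, heS⟩ := mem_inter.1 he
        have he' := mem_edgeFinset.1 he
        refine mem_biUnion.2 ⟨f ⟨e, he'⟩, mem_univ _, mem_inter.2 ⟨?_, heS⟩⟩
        rw [mem_edgeFinset, edgeSet_fromEdgeSet]
        exact ⟨⟨he', rfl⟩, G.not_isDiag_of_mem_edgeSet he'⟩
    _ ≤ ∑ i, #((H i).edgeFinset ∩ S.sym2) := card_biUnion_le
    _ ≤ ∑ _i : Fin m, (#S - 1) := sum_le_sum fun i _ => (hf i).card_edgeFinset_inter_sym2_le S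
    _ = m * (#S - 1) := by simp

theorem hasForestPartition_of_sparse {k : ℕ}
    (hsp : ∀ S : Finset V, #(G.edgeFinset ∩ S.sym2) ≤ k * (#S - 1)) : HasForestPartition G k := by
  rcases k.eq_zero_or_pos with rfl | hk
  · have hG : G.edgeFinset = ∅ := by simpa using hsp univ
    exact ⟨fun e => absurd (mem_edgeFinset.2 e.2) (by simp [hG]), fun i => i.elim0⟩
  · obtain ⟨c, hc⟩ := PendingColoring.exists_isAcyclic_of_sparse _ hk hsp
    refine ⟨fun e => c e, fun i => ?_⟩
    convert hc i using 2
    ext e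
    simp

theorem ncard_sep_edgeSet_eq_card_inter_sym2 (S : Finset V) :
    {e ∈ G.edgeSet | ∀ v ∈ e, v ∈ S}.ncard = #(G.edgeFinset ∩ S.sym2) := by
  rw [← Set.ncard_coe_finset]
  congr 1
  ext e
  simp only [Set.mem_ofPred_eq, coe_inter, Set.mem_inter_iff, mem_coe, mem_edgeFinset,
    Finset.mem_sym2_iff]

theorem card_edgeFinset_inter_sym2_eq_zero {S : Finset V} (hS : #S ≤ 1) :
    #(G.edgeFinset ∩ S.sym2) = 0 := by
  refine card_eq_zero.2 (eq_empty_of_forall_notMem fun e he => ?_)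
  obtain ⟨he, heS⟩ := mem_inter.1 he
  induction e with
  | h a b =>
    have hab : a ≠ b := G.ne_of_adj (mem_edgeFinset.1 he)
    rw [mk_mem_sym2_iff] at heS
    exact hab (card_le_one.1 hS _ heS.1 _ heS.2)

theorem ceil_density_le_iff (S : Finset V) (m : ℕ) :
    (if 2 ≤ #S then ⌈({e ∈ G.edgeSet | ∀ v ∈ e, v ∈ S}.ncard : ℚ) / ((#S : ℚ) - 1)⌉₊ else 0) ≤
      m ↔ #(G.edgeFinset ∩ S.sym2) ≤ m * (#S - 1) := by
  split_ifs with hS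
  · rw [ncard_sep_edgeSet_eq_card_inter_sym2,
      ← Nat.ceil_div_le_iff_le_mul (K := ℚ) (by omega : 0 < #S - 1),
      Nat.cast_sub (by omega : 1 ≤ #S), Nat.cast_one]
  · simp [card_edgeFinset_inter_sym2_eq_zero (by omega : #S ≤ 1)]

variable (G) in
theorem sup_ceil_density_le_iff (m : ℕ) :
    (univ.powerset.sup fun S : Finset V => if 2 ≤ #S then
        ⌈({e ∈ G.edgeSet | ∀ v ∈ e, v ∈ S}.ncard : ℚ) / ((#S : ℚ) - 1)⌉₊ else 0) ≤ m ↔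
      ∀ S : Finset V, #(G.edgeFinset ∩ S.sym2) ≤ m * (#S - 1) := by
  simp only [Finset.sup_le_iff, mem_powerset, subset_univ, true_implies, ceil_density_le_iff]

end

end NashWilliams

theorem stmt4_general {V : Type*} [Fintype V] (G : SimpleGraph V) :
    arboricity G = Finset.univ.powerset.sup (fun S : Finset V =>
      if 2 ≤ S.card then
        Nat.ceil (({e ∈ G.edgeSet | ∀ v ∈ e, v ∈ S}.ncard : ℚ) / ((S.card : ℚ) - 1))
      else 0) := by
  classical
  have hpart := hasForestPartition_of_sparse ((sup_ceil_density_le_iff G _).1 le_rfl)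
  exact le_antisymm (Nat.sInf_le hpart)
    (le_csInf ⟨_, hpart⟩ fun m hm =>
      (sup_ceil_density_le_iff G m).2 hm.card_edgeFinset_inter_sym2_le)

/-- Nash-Williams: for a finite simple graph on at least two vertices, the
arboricity equals `max_{S, |S| ≥ 2} ⌈|E(S)| / (|S| - 1)⌉`, where `E(S)` is the
set of edges with both endpoints in `S`. -/
theorem stmt4 {V : Type*} [Fintype V] [DecidableEq V] (G : SimpleGraph V)
    (h : 2 ≤ Fintype.card V) :
    arboricity G = Finset.univ.powerset.sup (fun S : Finset V =>
      if 2 ≤ S.card then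
        Nat.ceil (({e ∈ G.edgeSet | ∀ v ∈ e, v ∈ S}.ncard : ℚ) / ((S.card : ℚ) - 1))
      else 0) :=
  stmt4_general G
end
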